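/- arXiv:2210.11354 — 3 statements merged into one kernel-verified Lean document; each statement's English description precedes it below -/
import Mathlib

section
/- Let n ≥ 2 be even, s = s_n, a_{n+1} = (s^2 - s + 2)/4, a_n = (s-2)a_{n+1} + (s-1), x = 1 + a_n + a_{n+1}, d = (s-1)x, a_i = d/s_i for 0 ≤ i ≤ n-1, and b = (s^2 - 2s + 7)/2. Then d = a_1 + a_2 + ... + a_n + b·a_{n+1}. -/
def sylvester : ℕ → ℕ
  | 0 => 2
  | n + 1 => sylvester n * (sylvester n - 1) + 1

lemma sylvester_ge_two : ∀ n, 2 ≤ sylvester n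
  | 0 => le_refl 2
  | n + 1 => by
    have h := sylvester_ge_two n
    simp only [sylvester]
    have h1 : 1 ≤ sylvester n - 1 := by omega
    nlinarith

lemma sylvester_cast_succ (n : ℕ) :
    (sylvester (n + 1) : ℚ) = (sylvester n : ℚ) * ((sylvester n : ℚ) - 1) + 1 := by
  have h := sylvester_ge_two n
  simp only [sylvester]
  push_cast [Nat.cast_sub (by omega : 1 ≤ sylvester n)]
  ring

lemma sylvester_sum (n : ℕ) (hn : 1 ≤ n) :
    ∑ i ∈ Finset.Ico 1 n, (1 : ℚ) / (sylvester i : ℚ)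
      = 1 / 2 - 1 / ((sylvester n : ℚ) - 1) := by
  induction n with
  | zero => omega
  | succ m ih =>
    rcases Nat.eq_or_lt_of_le hn with h | h
    · have hm : m = 0 := by omega
      subst hm
      norm_num [sylvester_cast_succ, sylvester]
    · have hm : 1 ≤ m := by omega
      have hs := sylvester_ge_two m
      have hs0 : (sylvester m : ℚ) ≠ 0 := by positivity
      have hs1 : (sylvester m : ℚ) - 1 ≠ 0 := by
        have : (2 : ℚ) ≤ (sylvester m : ℚ) := by exact_mod_cast hs
        intro h; nlinarith
      rw [Finset.sum_Ico_succ_top hm, ih hm, sylvester_cast_succ]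
      field_simp
      ring

theorem degree_of_last_monomial (n : ℕ) (hn : 2 ≤ n) (hne : Even n) :
    let s : ℚ := (sylvester n : ℚ)
    let aTop : ℚ := (s ^ 2 - s + 2) / 4
    let aN : ℚ := (s - 2) * aTop + (s - 1)
    let x : ℚ := 1 + aN + aTop
    let d : ℚ := (s - 1) * x
    let b : ℚ := (s ^ 2 - 2 * s + 7) / 2
    d = (∑ i ∈ Finset.Ico 1 n, d / (sylvester i : ℚ)) + aN + b * aTop := by
  intro s aTop aN x d b
  have hs := sylvester_ge_two n
  have hs2 : (2 : ℚ) ≤ s := by simpa [s] using (Nat.ofNat_le_cast.mpr hs : (2:ℚ) ≤ sylvester n)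
  have hs1 : s - 1 ≠ 0 := by intro h; nlinarith
  have hsum : ∑ i ∈ Finset.Ico 1 n, d / (sylvester i : ℚ)
      = d * (1 / 2 - 1 / (s - 1)) := by
    rw [← sylvester_sum n (by omega), Finset.mul_sum]
    exact Finset.sum_congr rfl fun i _ => by ring
  rw [hsum]
  show (s - 1) * x = _
  simp only [d, x, aN, aTop, b]
  field_simp
  ring
end

section
/- The sequence V_n = 1/((s_n - 1)^{n-2} x_n^{n-1} a_n a_{n+1}), where a_{n+1} ~ s_n^2/4, a_n ~ s_n^3/4 and x_n ~ s_n^3/4, satisfies V_n · s_n^{4n} / 2^{2n+2} → 1 as n → ∞; that is, V_n is asymptotic to 2^{2n+2}/s_n^{4n}. -/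
noncomputable def sylA : ℕ → ℝ := fun n =>
  if Even n then ((sylvester n : ℝ) ^ 2 - (sylvester n : ℝ) + 2) / 4
  else ((sylvester n : ℝ) ^ 2 - 3 * (sylvester n : ℝ) + 4) / 4

noncomputable def sylAN : ℕ → ℝ := fun n =>
  ((sylvester n : ℝ) - 2) * sylA n + ((sylvester n : ℝ) - 1)

noncomputable def sylX : ℕ → ℝ := fun n => 1 + sylAN n + sylA n

noncomputable def sylVol : ℕ → ℝ := fun n =>
  1 / (((sylvester n : ℝ) - 1) ^ (n - 2) * sylX n ^ (n - 1) * sylAN n * sylA n)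

/-! With `s = sylvester n`, the normalized volume is the reciprocal of
`((s - 1) / s) ^ (n - 2) * (4 * sylX n / s ^ 3) ^ (n - 1) * (4 * sylAN n / s ^ 3) * (4 * sylA n / s ^ 2)`.
Each of the four bases is `1 + O(1 / s)` and `s > 2 ^ n`, so `n * (base - 1) → 0`, which is what
makes even the `(n - k)`-th powers of the bases tend to `1`. -/

open Filter Topology

lemma tendsto_of_tendsto_natCast_mul_sub_one {r : ℕ → ℝ}
    (hr : Tendsto (fun n : ℕ => n * (r n - 1)) atTop (𝓝 0)) :
    Tendsto r atTop (𝓝 1) := by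
  rw [← tendsto_sub_nhds_zero_iff]
  refine (hr.div_atTop tendsto_natCast_atTop_atTop).congr' ?_
  filter_upwards [eventually_ne_atTop 0] with n hn
  exact mul_div_cancel_left₀ _ (Nat.cast_ne_zero.mpr hn)

lemma tendsto_pow_sub_of_tendsto_natCast_mul_sub_one {r : ℕ → ℝ}
    (hr : Tendsto (fun n : ℕ => n * (r n - 1)) atTop (𝓝 0)) (k : ℕ) :
    Tendsto (fun n => r n ^ (n - k)) atTop (𝓝 1) := by
  have hr1 := tendsto_of_tendsto_natCast_mul_sub_one hr
  have hpow : Tendsto (fun n => r n ^ n) atTop (𝓝 1) := by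
    simpa using Real.tendsto_one_add_pow_exp_of_tendsto hr
  have hquot := hpow.div (hr1.pow k) (by norm_num)
  rw [one_pow, div_one] at hquot
  refine hquot.congr' ?_
  filter_upwards [eventually_ge_atTop k, hr1.eventually_ne one_ne_zero] with n hn hr0
  rw [Pi.div_apply, div_eq_iff (pow_ne_zero _ hr0), ← pow_add, Nat.sub_add_cancel hn]

lemma tendsto_natCast_mul_div_pow_sub_one {s y : ℕ → ℝ} {d : ℕ} {C : ℝ} (hs : ∀ n, 0 < s n)
    (hns : Tendsto (fun n : ℕ => n / s n) atTop (𝓝 0))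
    (hy : ∀ n, |y n - s n ^ (d + 1)| ≤ C * s n ^ d) :
    Tendsto (fun n : ℕ => n * (y n / s n ^ (d + 1) - 1)) atTop (𝓝 0) := by
  refine squeeze_zero_norm (fun n => ?_) (by simpa using hns.const_mul C)
  have hsn := hs n
  have hbound : |y n / s n ^ (d + 1) - 1| ≤ C / s n :=
    calc |y n / s n ^ (d + 1) - 1| = |y n - s n ^ (d + 1)| / s n ^ (d + 1) := by
          rw [div_sub_one (pow_ne_zero _ hsn.ne'), abs_div, abs_of_pos (pow_pos hsn _)]
      _ ≤ C * s n ^ d / s n ^ (d + 1) := by gcongr; exact hy n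
      _ = C / s n := by field_simp; ring
  rw [Real.norm_eq_abs, abs_mul, Nat.abs_cast]
  calc (n : ℝ) * |y n / s n ^ (d + 1) - 1| ≤ n * (C / s n) := by gcongr
    _ = C * (n / s n) := by ring

lemma two_pow_lt_sylvester (n : ℕ) : 2 ^ n < sylvester n := by
  induction n with
  | zero => simp [sylvester]
  | succ n ih =>
    have h : 2 * 2 ^ n ≤ sylvester n * (sylvester n - 1) :=
      Nat.mul_le_mul (by have := Nat.one_le_two_pow (n := n); omega) (by omega)
    rw [sylvester, pow_succ]
    omega

lemma tendsto_natCast_div_sylvester :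
    Tendsto (fun n : ℕ => n / (sylvester n : ℝ)) atTop (𝓝 0) := by
  refine squeeze_zero (fun n => by positivity) (fun n => ?_)
    (by simpa using tendsto_pow_const_div_const_pow_of_one_lt 1 one_lt_two)
  gcongr
  exact_mod_cast (two_pow_lt_sylvester n).le

lemma four_mul_sylA_eq_or (n : ℕ) :
    4 * sylA n = (sylvester n : ℝ) ^ 2 - sylvester n + 2 ∨
      4 * sylA n = (sylvester n : ℝ) ^ 2 - 3 * sylvester n + 4 := by
  unfold sylA
  split_ifs
  exacts [Or.inl (by ring), Or.inr (by ring)]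

lemma one_le_sylvester (n : ℕ) : (1 : ℝ) ≤ sylvester n := by
  exact_mod_cast (Nat.one_le_two_pow.trans_lt (two_pow_lt_sylvester n)).le

lemma abs_four_mul_sylA_sub_le (n : ℕ) :
    |4 * sylA n - (sylvester n : ℝ) ^ 2| ≤ 3 * (sylvester n : ℝ) ^ 1 := by
  have := one_le_sylvester n
  rw [abs_le]
  rcases four_mul_sylA_eq_or n with h | h <;> rw [h] <;> constructor <;> nlinarith

lemma abs_four_mul_sylAN_sub_le (n : ℕ) :
    |4 * sylAN n - (sylvester n : ℝ) ^ 3| ≤ 5 * (sylvester n : ℝ) ^ 2 := by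
  have := one_le_sylvester n
  have hAN : 4 * sylAN n = (sylvester n - 2) * (4 * sylA n) + 4 * (sylvester n - 1) := by
    unfold sylAN; ring
  rw [abs_le, hAN]
  rcases four_mul_sylA_eq_or n with h | h <;> rw [h] <;> constructor <;> nlinarith

lemma abs_four_mul_sylX_sub_le (n : ℕ) :
    |4 * sylX n - (sylvester n : ℝ) ^ 3| ≤ 4 * (sylvester n : ℝ) ^ 2 := by
  have := one_le_sylvester n
  have hX : 4 * sylX n = (sylvester n - 1) * (4 * sylA n) + 4 * sylvester n := by
    unfold sylX sylAN; ring
  rw [abs_le, hX]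
  rcases four_mul_sylA_eq_or n with h | h <;> rw [h] <;> constructor <;> nlinarith

lemma sylVol_mul_pow_div_eq (n : ℕ) (hn : 2 ≤ n) :
    sylVol n * (sylvester n : ℝ) ^ (4 * n) / 2 ^ (2 * n + 2) =
      (((sylvester n - 1) / sylvester n) ^ (n - 2) * (4 * sylX n / sylvester n ^ 3) ^ (n - 1) *
        (4 * sylAN n / sylvester n ^ 3) * (4 * sylA n / sylvester n ^ 2))⁻¹ := by
  obtain ⟨m, rfl⟩ := Nat.exists_eq_add_of_le' hn
  have hs : (sylvester (m + 2) : ℝ) ≠ 0 := by linarith [one_le_sylvester (m + 2)]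
  rw [← inv_inv (sylVol _ * _ / _)]
  congr 1
  rw [sylVol, one_div_mul_eq_div, div_div, inv_div, Nat.add_sub_cancel,
    show m + 2 - 1 = m + 1 by omega]
  simp only [div_pow, mul_pow, pow_add, pow_mul]
  field_simp
  ring

theorem volume_asymptotics :
    Filter.Tendsto
      (fun n => sylVol n * (sylvester n : ℝ) ^ (4 * n) / 2 ^ (2 * n + 2))
      Filter.atTop (nhds 1) := by
  have hrel {d : ℕ} {C : ℝ} {y : ℕ → ℝ}
      (hy : ∀ n, |y n - (sylvester n : ℝ) ^ (d + 1)| ≤ C * (sylvester n : ℝ) ^ d) :=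
    tendsto_natCast_mul_div_pow_sub_one (fun n => by linarith [one_le_sylvester n])
      tendsto_natCast_div_sylvester hy
  have hS := tendsto_pow_sub_of_tendsto_natCast_mul_sub_one
    (hrel (y := fun n => sylvester n - 1) (d := 0) (C := 1) (fun n => by simp)) 2
  have hX := tendsto_pow_sub_of_tendsto_natCast_mul_sub_one (hrel abs_four_mul_sylX_sub_le) 1
  have hAN := tendsto_of_tendsto_natCast_mul_sub_one (hrel abs_four_mul_sylAN_sub_le)
  have hA := tendsto_of_tendsto_natCast_mul_sub_one (hrel abs_four_mul_sylA_sub_le)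
  have hP := (((hS.mul hX).mul hAN).mul hA).inv₀ (by norm_num)
  rw [mul_one, mul_one, mul_one, inv_one] at hP
  refine hP.congr' ?_
  filter_upwards [eventually_ge_atTop 2] with n hn
  rw [sylVol_mul_pow_div_eq n hn, zero_add, pow_one]
end

section
/- Let n ≥ 4 be even, s = s_n, a_{n+1} = (20s^2 - 295s + 113)/36, a_n = (20s^2 - 55s + 17)/36, and x = -1 + a_n + a_{n+1}. Then gcd(a_{n+1}, x) = 1 and gcd(a_n, x) = 1 and gcd(a_n, s - 1) = 1. -/
lemma sylvester_pos (n : ℕ) : 0 < sylvester n := by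
  cases n <;> simp [sylvester]

lemma sylvester_succ_cast (n : ℕ) :
    (sylvester (n + 1) : ℤ) = (sylvester n : ℤ) ^ 2 - sylvester n + 1 := by
  rw [sylvester, Nat.cast_add, Nat.cast_mul, Nat.cast_sub (sylvester_pos n)]
  push_cast
  ring

lemma sylvester_two_mul_add_two_modEq (m : ℕ) : (sylvester (2 * m + 2) : ℤ) ≡ 7 [ZMOD 72] := by
  induction m with
  | zero => decide
  | succ m ih =>
    have h43 : (sylvester (2 * m + 3) : ℤ) ≡ 43 [ZMOD 72] := by
      rw [sylvester_succ_cast]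
      exact (((ih.pow 2).sub ih).add_right 1).trans (by decide)
    rw [show 2 * (m + 1) + 2 = 2 * m + 3 + 1 by ring, sylvester_succ_cast]
    exact (((h43.pow 2).sub h43).add_right 1).trans (by decide)

lemma sylvester_eq_of_even (n : ℕ) (hn : 2 ≤ n) (hne : Even n) :
    ∃ k : ℤ, (sylvester n : ℤ) = 72 * k + 7 := by
  obtain ⟨m, rfl⟩ : ∃ m, n = 2 * m + 2 := by
    obtain ⟨r, hr⟩ := hne
    exact ⟨r - 1, by omega⟩
  obtain ⟨k, hk⟩ := (sylvester_two_mul_add_two_modEq m).symm.dvd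
  exact ⟨k, by linarith⟩

section Weights

variable (k : ℤ)

lemma isCoprime_top_weight_weight_sum :
    IsCoprime (2880 * k ^ 2 - 30 * k - 27) (5760 * k ^ 2 + 420 * k - 11) :=
  ⟨345345442 - 13185916880 * k - 180835431360 * k ^ 2,
    -847666085 - 941851200 * k + 90417715680 * k ^ 2, by ring⟩

lemma isCoprime_bottom_weight_weight_sum :
    IsCoprime (2880 * k ^ 2 + 450 * k + 17) (5760 * k ^ 2 + 420 * k - 11) :=
  ⟨2 - 96 * k, 3 + 48 * k, by ring⟩

lemma isCoprime_bottom_weight_sylvester_pred :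
    IsCoprime (2880 * k ^ 2 + 450 * k + 17) (72 * k + 6) :=
  ⟨12 * k - 1, -480 * k ^ 2 + 5 * k + 3, by ring⟩

end Weights

theorem bottom_weight_fano_wellformed (n : ℕ) (hn : 4 ≤ n) (hne : Even n) (A B : ℤ)
    (hA : 36 * A = 20 * (sylvester n : ℤ) ^ 2 - 295 * (sylvester n : ℤ) + 113)
    (hB : 36 * B = 20 * (sylvester n : ℤ) ^ 2 - 55 * (sylvester n : ℤ) + 17) :
    Int.gcd A (-1 + B + A) = 1 ∧ Int.gcd B (-1 + B + A) = 1 ∧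
      Int.gcd B ((sylvester n : ℤ) - 1) = 1 := by
  obtain ⟨k, hs⟩ := sylvester_eq_of_even n (by omega) hne
  have hpred : (sylvester n : ℤ) - 1 = 72 * k + 6 := by rw [hs]; ring
  rw [hs] at hA hB
  obtain rfl : A = 2880 * k ^ 2 - 30 * k - 27 := by linarith
  obtain rfl : B = 2880 * k ^ 2 + 450 * k + 17 := by linarith
  have hsum : -1 + (2880 * k ^ 2 + 450 * k + 17) + (2880 * k ^ 2 - 30 * k - 27)
      = 5760 * k ^ 2 + 420 * k - 11 := by ring
  simp only [hsum, hpred, ← Int.isCoprime_iff_gcd_eq_one]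
  exact ⟨isCoprime_top_weight_weight_sum k, isCoprime_bottom_weight_weight_sum k,
    isCoprime_bottom_weight_sylvester_pred k⟩
end
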